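/- arXiv:2212.09954 — 2 statements merged into one kernel-verified Lean document; each statement's English description precedes it below -/
import Mathlib

section
/- Let f : ℝ^d → ℝ ∪ {+∞} be a closed convex function and C a compact set in ℝ^d such that C ∩ dom f* ≠ ∅. Then for every x ∈ ℝ^d the following are equivalent: (i) ∂f(x) ∩ C ≠ ∅; (ii) f(x) = f_C(x); (iii) ∂f(x) ∩ C = ∂f_C(x) ∩ C. -/
open Filter Topology Set Pointwise
open scoped RealInnerProductSpace

noncomputable section

abbrev Euc (d : ℕ) := EuclideanSpace ℝ (Fin d)

/-- A proper lower-semicontinuous (closed) convex function with values in `ℝ ∪ {+∞}`. -/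
def ClosedConvexFun {d : ℕ} (f : Euc d → EReal) : Prop :=
  LowerSemicontinuous f ∧ (∀ x, f x ≠ ⊥) ∧ (∃ x, f x ≠ ⊤) ∧
    ∀ x y : Euc d, ∀ a b : ℝ, 0 ≤ a → 0 ≤ b → a + b = 1 →
      f (a • x + b • y) ≤ (a : EReal) * f x + (b : EReal) * f y

/-- Subdifferential of an `EReal`-valued function. -/
def subdiff {d : ℕ} (f : Euc d → EReal) (x : Euc d) : Set (Euc d) :=
  {y | ∀ z : Euc d, ((⟪z, y⟫ : ℝ) : EReal) + f x ≤ f (x + z)}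

/-- Convex conjugate. -/
def fconj {d : ℕ} (f : Euc d → EReal) (y : Euc d) : EReal :=
  ⨆ x : Euc d, ((⟪x, y⟫ : ℝ) : EReal) - f x

/-- The function `f_A(x) = sup_{y ∈ A} (⟨x,y⟩ - f*(y))`. -/
def restrSup {d : ℕ} (f : Euc d → EReal) (A : Set (Euc d)) (x : Euc d) : EReal :=
  ⨆ y ∈ A, (((⟪x, y⟫ : ℝ) : EReal) - fconj f y)

/-- `Arg_A(x) = argmax_{y ∈ A} (⟨x,y⟩ - f*(y))`. -/
def argMaxOn {d : ℕ} (f : Euc d → EReal) (A : Set (Euc d)) (x : Euc d) : Set (Euc d) :=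
  {y ∈ A | ∀ z ∈ A, ((⟪x, z⟫ : ℝ) : EReal) - fconj f z ≤ ((⟪x, y⟫ : ℝ) : EReal) - fconj f y}

/-- Linear growth: `|g x| ≤ K (1 + |x|)`. -/
def LinGrowth {k : ℕ} (g : Euc k → ℝ) : Prop :=
  ∃ K > 0, ∀ x, |g x| ≤ K * (1 + ‖x‖)

/-- `x^{-j}`: delete the `j`-th coordinate. -/
def dropCoord {d : ℕ} (j : Fin (d + 1)) (x : Euc (d + 1)) : Euc d :=
  WithLp.toLp 2 (fun i => x (j.succAbove i))

/-- The class `H^j_C`. -/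
def MemH {d : ℕ} (j : Fin (d + 1)) (C : Set (Euc (d + 1))) (h : Euc (d + 1) → ℝ) : Prop :=
  ∃ g₁ g₂ : Euc d → ℝ, ConvexOn ℝ Set.univ g₁ ∧ ConvexOn ℝ Set.univ g₂ ∧
    LinGrowth g₁ ∧ LinGrowth g₂ ∧
    (∀ x : Euc (d + 1), h x = x j + g₁ (dropCoord j x) - g₂ (dropCoord j x)) ∧
    ∀ x : Euc (d + 1), DifferentiableAt ℝ g₁ (dropCoord j x) →
      DifferentiableAt ℝ g₂ (dropCoord j x) → gradient h x ∈ C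

/-- `θ^j(C) = {y / y^j : y ∈ C}`. -/
def theta {d : ℕ} (j : Fin d) (C : Set (Euc d)) : Set (Euc d) :=
  (fun y => (y j)⁻¹ • y) '' C

/-- `w` is a regular normal to `H` at `x`: `limsup_{H ∋ y → x} ⟨w, y-x⟩/|y-x| ≤ 0`. -/
def RegNormal {d : ℕ} (H : Set (Euc d)) (x w : Euc d) : Prop :=
  ∀ ε > 0, ∃ δ > 0, ∀ y ∈ H, y ≠ x → ‖y - x‖ < δ → ⟪w, y - x⟫ ≤ ε * ‖y - x‖

/-- `w` is a normal vector to `H` at `x`. -/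
def NormalVec {d : ℕ} (H : Set (Euc d)) (x w : Euc d) : Prop :=
  ∃ xs ws : ℕ → Euc d, (∀ n, xs n ∈ H ∧ RegNormal H (xs n) (ws n)) ∧
    Tendsto xs atTop (𝓝 x) ∧ Tendsto ws atTop (𝓝 w)

/-- Effective domain `{x | f x < ∞}`. -/
def effDom {d : ℕ} (f : Euc d → EReal) : Set (Euc d) := {x | f x ≠ ⊤}

/-- Real part of an `EReal`-valued function. -/
def toRealFun {d : ℕ} (f : Euc d → EReal) : Euc d → ℝ := fun x => (f x).toReal

/-- Points of `int (dom f)` where `f` is differentiable. -/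
def domGrad {d : ℕ} (f : Euc d → EReal) : Set (Euc d) :=
  {x | x ∈ interior (effDom f) ∧ DifferentiableAt ℝ (toRealFun f) x}

/-- `range ∇f`. -/
def gradRange {d : ℕ} (f : Euc d → EReal) : Set (Euc d) :=
  (fun x => gradient (toRealFun f) x) '' domGrad f

/-- Clarke-type subdifferential `∂̄f(x)`. -/
def clarke {d : ℕ} (f : Euc d → EReal) (x : Euc d) : Set (Euc d) :=
  closure (convexHull ℝ
    {v | ∃ xs : ℕ → Euc d, (∀ n, xs n ∈ domGrad f) ∧ Tendsto xs atTop (𝓝 x) ∧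
      Tendsto (fun n => gradient (toRealFun f) (xs n)) atTop (𝓝 v)})

/-- Singular set `Σ^j_A(Ψ)`. -/
def SigmaJ {d : ℕ} (Ψ : Euc d → Set (Euc d)) (j : Fin d) (A : Set (Euc d)) : Set (Euc d) :=
  {x | ∃ y₁ ∈ Ψ x ∩ A, ∃ y₂ ∈ Ψ x ∩ A, y₁ j ≠ y₂ j}

/-- The bilinear form `S(x,y) = ∑ x^i S^{ij} y^j`. -/
def Sbil {d : ℕ} (S : Matrix (Fin d) (Fin d) ℝ) (x y : Euc d) : ℝ :=
  ∑ i, ∑ k, x i * S i k * y k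

/-- Matrix acting on a vector. -/
def matVec {d : ℕ} (M : Matrix (Fin d) (Fin d) ℝ) (y : Euc d) : Euc d :=
  WithLp.toLp 2 (fun i => ∑ k, M i k * y k)

/-- Fitzpatrick function `ψ_G(x) = sup_{y ∈ G}(S(x,y) - S(y,y)/2)`. -/
def fitz {d : ℕ} (S : Matrix (Fin d) (Fin d) ℝ) (G : Set (Euc d)) (x : Euc d) : EReal :=
  ⨆ y ∈ G, ((Sbil S x y - Sbil S y y / 2 : ℝ) : EReal)

/-- `S`-monotone set. -/
def SMonotone {d : ℕ} (S : Matrix (Fin d) (Fin d) ℝ) (G : Set (Euc d)) : Prop :=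
  ∀ x ∈ G, ∀ y ∈ G, 0 ≤ Sbil S (x - y) (x - y)

/-- Projection `P_G(x) = argmin_{y ∈ G} S(x-y, x-y)`. -/
def proj {d : ℕ} (S : Matrix (Fin d) (Fin d) ℝ) (G : Set (Euc d)) (x : Euc d) : Set (Euc d) :=
  {y ∈ G | ∀ z ∈ G, Sbil S (x - y) (x - y) ≤ Sbil S (x - z) (x - z)}

/-- `S`-regular normal vector. -/
def SRegNormal {d : ℕ} (S : Matrix (Fin d) (Fin d) ℝ) (H : Set (Euc d)) (x w : Euc d) : Prop :=
  ∀ ε > 0, ∃ δ > 0, ∀ y ∈ H, y ≠ x → ‖y - x‖ < δ → Sbil S w (y - x) ≤ ε * ‖y - x‖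

/-- `S`-normal vector. -/
def SNormal {d : ℕ} (S : Matrix (Fin d) (Fin d) ℝ) (H : Set (Euc d)) (x w : Euc d) : Prop :=
  ∃ xs ws : ℕ → Euc d, (∀ n, xs n ∈ H ∧ SRegNormal S H (xs n) (ws n)) ∧
    Tendsto xs atTop (𝓝 x) ∧ Tendsto ws atTop (𝓝 w)

/-- First-order singular set `Σ₁^j(P_G)`. -/
def Sigma1J {d : ℕ} (S : Matrix (Fin d) (Fin d) ℝ) (G : Set (Euc d)) (j : Fin d) :
    Set (Euc d) :=
  {x | ∃ y₁ ∈ proj S G x, ∃ y₂ ∈ proj S G x,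
    0 < Sbil S (y₁ - y₂) (y₁ - y₂) ∧ y₁ j ≠ y₂ j}

/-- Zero-order singular set `Σ̄₀^j(P_G)`. -/
def Sigma0J {d : ℕ} (S : Matrix (Fin d) (Fin d) ℝ) (G : Set (Euc d)) (j : Fin d) :
    Set (Euc d) :=
  {x | ∃ y₁ ∈ proj S G x, ∃ y₂ ∈ proj S G x,
    Sbil S (y₁ - y₂) (y₁ - y₂) = 0 ∧ y₁ j ≠ y₂ j}

/-- The canonical bilinear form of index `m` on `ℝ^m × ℝ^k`. -/
def Lam {m k : ℕ} (p q : Euc m × Euc k) : ℝ := ⟪p.1, q.1⟫ - ⟪p.2, q.2⟫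

/-! By Fenchel–Young, `⟪x, y⟫ - f* y ≤ f x` for all `x, y`, with equality exactly when
`y ∈ ∂f(x)`; hence `f_C ≤ f`, and `f x = f_C x` as soon as some `y ∈ C` is a subgradient.
Conversely, `y ↦ ⟪x, y⟫ - f* y` is upper semicontinuous (`f*` is a supremum of affine
functions), so it attains `f_C x` at some `y₀` of the compact set `C`. The affine function
`⟪·, y₀⟫ - f* y₀` then lies below `f_C` and touches it at `x`, so `y₀ ∈ ∂f_C(x)`; if moreover
`f x = f_C x`, it touches `f` too and `y₀ ∈ ∂f(x)`. -/

namespace EReal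

lemma coe_sub_le_comm {a : ℝ} {b c : EReal} (h : (a : EReal) - b ≤ c) : (a : EReal) - c ≤ b := by
  induction b <;> induction c <;> simp_all [← EReal.coe_sub]; linarith

lemma le_coe_sub_comm {a : ℝ} {b c : EReal} (h : b ≤ (a : EReal) - c) : c ≤ (a : EReal) - b := by
  induction b <;> induction c <;> simp_all [← EReal.coe_sub]; linarith

lemma coe_sub_coe_sub (a b : ℝ) (u : EReal) :
    (a : EReal) - ((b : EReal) - u) = ((a - b : ℝ) : EReal) + u := by
  induction u <;> simp [← EReal.coe_sub, ← EReal.coe_add]; ring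

end EReal

section Conjugate

variable {d : ℕ} (f : Euc d → EReal)

lemma inner_sub_le_fconj (x y : Euc d) : ((⟪x, y⟫ : ℝ) : EReal) - f x ≤ fconj f y :=
  le_iSup (fun x => ((⟪x, y⟫ : ℝ) : EReal) - f x) x

lemma inner_sub_fconj_le (x y : Euc d) : ((⟪x, y⟫ : ℝ) : EReal) - fconj f y ≤ f x :=
  EReal.coe_sub_le_comm (inner_sub_le_fconj f x y)

lemma lowerSemicontinuous_fconj : LowerSemicontinuous (fconj f) :=
  lowerSemicontinuous_iSup fun _ =>
    EReal.lowerSemicontinuous_add.comp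
      ((continuous_coe_real_ereal.comp (continuous_const.inner continuous_id)).prodMk
        continuous_const)

lemma upperSemicontinuous_inner_sub_fconj (x : Euc d) :
    UpperSemicontinuous fun y => ((⟪x, y⟫ : ℝ) : EReal) - fconj f y :=
  (continuous_coe_real_ereal.comp (continuous_const.inner continuous_id)).upperSemicontinuous.add'
    (continuous_neg.comp_lowerSemicontinuous_antitone (lowerSemicontinuous_fconj f)
      fun _ _ => EReal.neg_le_neg_iff.2)
    fun _ => EReal.continuousAt_add (.inl (EReal.coe_ne_top _)) (.inl (EReal.coe_ne_bot _))

end Conjugate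

section Subdifferential

variable {d : ℕ} {f g : Euc d → EReal} {x y : Euc d}

lemma mem_subdiff_of_affine_minorant {c : EReal} (hg : ∀ w, ((⟪w, y⟫ : ℝ) : EReal) - c ≤ g w)
    (hx : g x ≤ ((⟪x, y⟫ : ℝ) : EReal) - c) : y ∈ subdiff g x := by
  intro z
  calc ((⟪z, y⟫ : ℝ) : EReal) + g x ≤ ((⟪z, y⟫ : ℝ) : EReal) + (((⟪x, y⟫ : ℝ) : EReal) - c) :=
        add_le_add_right hx _
    _ = ((⟪x + z, y⟫ : ℝ) : EReal) - c := by
        rw [inner_add_left, EReal.coe_add, sub_eq_add_neg, sub_eq_add_neg, add_left_comm,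
          add_assoc]
    _ ≤ g (x + z) := hg (x + z)

lemma le_inner_sub_fconj_of_mem_subdiff (hy : y ∈ subdiff f x) :
    f x ≤ ((⟪x, y⟫ : ℝ) : EReal) - fconj f y := by
  refine EReal.le_coe_sub_comm (iSup_le fun w => EReal.coe_sub_le_comm ?_)
  have := hy (w - x)
  rwa [add_sub_cancel, inner_sub_left, ← EReal.coe_sub_coe_sub] at this

lemma mem_subdiff_iff_le_inner_sub_fconj :
    y ∈ subdiff f x ↔ f x ≤ ((⟪x, y⟫ : ℝ) : EReal) - fconj f y :=
  ⟨le_inner_sub_fconj_of_mem_subdiff,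
    mem_subdiff_of_affine_minorant fun w => inner_sub_fconj_le f w y⟩

lemma subdiff_subset_of_le (hle : ∀ w, g w ≤ f w) (hx : f x = g x) :
    subdiff g x ⊆ subdiff f x := fun _ hy z => hx ▸ (hy z).trans (hle (x + z))

end Subdifferential

section RestrSup

variable {d : ℕ} (f : Euc d → EReal) {C : Set (Euc d)}

lemma inner_sub_fconj_le_restrSup {y : Euc d} (hy : y ∈ C) (x : Euc d) :
    ((⟪x, y⟫ : ℝ) : EReal) - fconj f y ≤ restrSup f C x :=
  le_iSup₂ (f := fun y (_ : y ∈ C) => ((⟪x, y⟫ : ℝ) : EReal) - fconj f y) y hy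

lemma restrSup_le (C : Set (Euc d)) (x : Euc d) : restrSup f C x ≤ f x :=
  iSup₂_le fun y _ => inner_sub_fconj_le f x y

lemma exists_restrSup_eq (hC : IsCompact C) (hne : C.Nonempty) (x : Euc d) :
    ∃ y ∈ C, restrSup f C x = ((⟪x, y⟫ : ℝ) : EReal) - fconj f y := by
  obtain ⟨y, hyC, hmax⟩ :=
    ((upperSemicontinuous_inner_sub_fconj f x).upperSemicontinuousOn C).exists_isMaxOn hne hC
  exact ⟨y, hyC, le_antisymm (iSup₂_le hmax) (inner_sub_fconj_le_restrSup f hyC x)⟩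

end RestrSup

theorem stmt4_general {d : ℕ} (f : Euc d → EReal)
    (C : Set (Euc d)) (hC : IsCompact C)
    (hCdom : (C ∩ {y | fconj f y ≠ ⊤}).Nonempty) (x : Euc d) :
    ((subdiff f x ∩ C).Nonempty ↔ f x = restrSup f C x) ∧
    ((subdiff f x ∩ C).Nonempty ↔
      subdiff f x ∩ C = subdiff (restrSup f C) x ∩ C) := by
  obtain ⟨y₀, hy₀C, hy₀⟩ := exists_restrSup_eq f hC (hCdom.mono inter_subset_left) x
  have i_to_ii : (subdiff f x ∩ C).Nonempty → f x = restrSup f C x := fun ⟨y, hy, hyC⟩ =>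
    le_antisymm ((mem_subdiff_iff_le_inner_sub_fconj.1 hy).trans
      (inner_sub_fconj_le_restrSup f hyC x)) (restrSup_le f C x)
  have ii_to_i (hfx : f x = restrSup f C x) : (subdiff f x ∩ C).Nonempty :=
    ⟨y₀, mem_subdiff_iff_le_inner_sub_fconj.2 (hfx.trans hy₀).le, hy₀C⟩
  have i_to_iii (hne : (subdiff f x ∩ C).Nonempty) :
      subdiff f x ∩ C = subdiff (restrSup f C) x ∩ C := by
    have hfx := i_to_ii hne
    ext y
    refine ⟨fun ⟨hy, hyC⟩ => ⟨?_, hyC⟩,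
      fun ⟨hy, hyC⟩ => ⟨subdiff_subset_of_le (restrSup_le f C) hfx hy, hyC⟩⟩
    exact mem_subdiff_of_affine_minorant (inner_sub_fconj_le_restrSup f hyC)
      (hfx ▸ mem_subdiff_iff_le_inner_sub_fconj.1 hy)
  have iii_to_i (hset : subdiff f x ∩ C = subdiff (restrSup f C) x ∩ C) :
      (subdiff f x ∩ C).Nonempty :=
    ⟨y₀, hset ▸ ⟨mem_subdiff_of_affine_minorant (inner_sub_fconj_le_restrSup f hy₀C) hy₀.le, hy₀C⟩⟩
  exact ⟨⟨i_to_ii, ii_to_i⟩, i_to_iii, iii_to_i⟩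

/-- Lemma 2 of the paper, third part. -/
theorem stmt4 {d : ℕ} (f : Euc d → EReal) (hf : ClosedConvexFun f)
    (C : Set (Euc d)) (hC : IsCompact C)
    (hCdom : (C ∩ {y | fconj f y ≠ ⊤}).Nonempty) (x : Euc d) :
    ((subdiff f x ∩ C).Nonempty ↔ f x = restrSup f C x) ∧
    ((subdiff f x ∩ C).Nonempty ↔
      subdiff f x ∩ C = subdiff (restrSup f C) x ∩ C) :=
  stmt4_general f C hC hCdom x

end
end

section
/- Let f : ℝ^d → ℝ ∪ {+∞} be a closed convex function with D := int(dom f) ≠ ∅, and let A be a closed set in ℝ^d such that f = f_A on cl D. Then ∂̄f(x) = ∂f(x) = conv(∂f(x) ∩ A) for every x ∈ D, and ∂̄f(x) ⊂ cl conv(∂f(x) ∩ A) for every x ∈ dom ∂̄f. -/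
open Filter Topology Set Pointwise
open scoped RealInnerProductSpace

noncomputable section

/-!
At a point `x` of `D`, fix a subgradient `v` and a direction `h`. For small `t > 0` a
`t²`-maximiser `y ∈ A` of the supremum defining `f_A (x + t h) = f (x + t h)` is, by the
Fenchel–Young inequality, a `t²`-subgradient of `f` at `x + t h`. Comparing it with `v` gives
`⟪h, v⟫ ≤ ⟪h, y⟫ + t`, and the local Lipschitz bound of `f` keeps these `y` bounded. Since the
graph of `(x, ε) ↦ ∂_ε f(x)` is closed for lower semicontinuous `f`, a limit point lies in
`∂f(x) ∩ A` and dominates `v` in direction `h`; separating by hyperplanes yields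
`∂f(x) = conv (∂f(x) ∩ A)`. Replacing the maximisers by gradients at nearby differentiability
points (Rademacher) gives `∂f(x) ⊆ ∂̄f(x)` in the same way. Conversely, limits of gradients are
subgradients by the same closedness, and lie in `A` because at a differentiability point
`∂f = {∇f}` meets `A`.
-/

open Metric

theorem IsCompact.convexHull_of_finiteDimensional {E : Type*} [NormedAddCommGroup E]
    [NormedSpace ℝ E] [FiniteDimensional ℝ E] {s : Set E} (hs : IsCompact s) :
    IsCompact (convexHull ℝ s) := by
  set combos : ℕ → Set E := fun n =>
    (fun p : (Fin n → ℝ) × (Fin n → E) => ∑ i, p.1 i • p.2 i) ''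
      (stdSimplex ℝ (Fin n) ×ˢ univ.pi fun _ => s)
  -- Carathéodory: combinations of at most `finrank + 1` points suffice.
  have hcombos : convexHull ℝ s = ⋃ n ∈ Finset.range (Module.finrank ℝ E + 2), combos n := by
    refine Subset.antisymm (fun x hx => ?_) (iUnion₂_subset fun n _ => ?_)
    · obtain ⟨ι, _, z, w, hzs, hai, hw0, hw1, rfl⟩ := eq_pos_convex_span_of_mem_convexHull hx
      have hcard := hai.card_le_finrank_succ
      have hspan := Submodule.finrank_le (vectorSpan ℝ (range z))
      let e := (Fintype.equivFin ι).symm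
      refine mem_iUnion₂.2 ⟨Fintype.card ι, Finset.mem_range.2 (by omega),
        (w ∘ e, z ∘ e), ⟨⟨fun i => (hw0 _).le, ?_⟩, fun i _ => hzs ⟨_, rfl⟩⟩, ?_⟩
      · simpa [e] using (e.sum_comp w).trans hw1
      · exact e.sum_comp fun i => w i • z i
    · rintro _ ⟨⟨w, z⟩, ⟨hw, hz⟩, rfl⟩
      exact (convex_convexHull ℝ s).sum_mem (fun i _ => hw.1 i) hw.2
        fun i _ => subset_convexHull ℝ s (hz i trivial)
  rw [hcombos]
  exact (Finset.range _).isCompact_biUnion fun n _ =>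
    ((isCompact_stdSimplex _ _).prod (isCompact_univ_pi fun _ => hs)).image (by fun_prop)

theorem mem_of_forall_exists_inner_le {E : Type*} [NormedAddCommGroup E]
    [InnerProductSpace ℝ E] [CompleteSpace E] {K : Set E} (hK : IsClosed K) (hKc : Convex ℝ K)
    {v : E} (h : ∀ w, ∃ y ∈ K, ⟪w, v⟫ ≤ ⟪w, y⟫) : v ∈ K := by
  by_contra hv
  obtain ⟨l, u, hlK, hlv⟩ := geometric_hahn_banach_closed_point hKc hK hv
  obtain ⟨y, hyK, hy⟩ := h ((InnerProductSpace.toDual ℝ E).symm l)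
  simp only [InnerProductSpace.toDual_symm_apply] at hy
  linarith [hlK y hyK]

theorem LocallyLipschitzOn.exists_ball_lipschitzOnWith {X Y : Type*} [PseudoMetricSpace X]
    [PseudoMetricSpace Y] {U : Set X} {g : X → Y} (hg : LocallyLipschitzOn U g) (hU : IsOpen U)
    {x : X} (hx : x ∈ U) : ∃ δ > 0, ∃ K, ball x δ ⊆ U ∧ LipschitzOnWith K g (ball x δ) := by
  obtain ⟨K, t, ht, hK⟩ := hg hx
  rw [hU.nhdsWithin_eq hx] at ht
  obtain ⟨δ, hδ, hball⟩ := Metric.mem_nhds_iff.1 (inter_mem ht (hU.mem_nhds hx))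
  exact ⟨δ, hδ, K, fun z hz => (hball hz).2, hK.mono fun z hz => (hball hz).1⟩

section ConvexAnalysis

variable {d : ℕ} {f : Euc d → EReal} {x y : Euc d}

theorem ClosedConvexFun.lowerSemicontinuous (hf : ClosedConvexFun f) : LowerSemicontinuous f :=
  hf.1

theorem ClosedConvexFun.coe_toRealFun (hf : ClosedConvexFun f) (hx : x ∈ effDom f) :
    ((toRealFun f x : ℝ) : EReal) = f x :=
  EReal.coe_toReal hx (hf.2.1 x)

theorem ClosedConvexFun.convexOn_toRealFun (hf : ClosedConvexFun f) :
    ConvexOn ℝ (effDom f) (toRealFun f) := by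
  have key : ∀ x ∈ effDom f, ∀ y ∈ effDom f, ∀ a b : ℝ, 0 ≤ a → 0 ≤ b → a + b = 1 →
      f (a • x + b • y) ≤ ((a * toRealFun f x + b * toRealFun f y : ℝ) : EReal) := by
    intro x hx y hy a b ha hb hab
    rw [EReal.coe_add, EReal.coe_mul, EReal.coe_mul, hf.coe_toRealFun hx, hf.coe_toRealFun hy]
    exact hf.2.2.2 x y a b ha hb hab
  have hconv : Convex ℝ (effDom f) := fun x hx y hy a b ha hb hab =>
    ne_top_of_le_ne_top (EReal.coe_ne_top _) (key x hx y hy a b ha hb hab)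
  refine ⟨hconv, fun x hx y hy a b ha hb hab => ?_⟩
  rw [← EReal.coe_le_coe_iff, hf.coe_toRealFun (hconv hx hy ha hb hab)]
  exact key x hx y hy a b ha hb hab

theorem ClosedConvexFun.exists_ball_lipschitzOnWith (hf : ClosedConvexFun f)
    (hx : x ∈ interior (effDom f)) :
    ∃ δ > 0, ∃ K, ball x δ ⊆ interior (effDom f) ∧ LipschitzOnWith K (toRealFun f) (ball x δ) :=
  hf.convexOn_toRealFun.locallyLipschitzOn_interior.exists_ball_lipschitzOnWith isOpen_interior hx

def approxSubdiff (f : Euc d → EReal) (ε : ℝ) (x : Euc d) : Set (Euc d) :=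
  {y | ∀ x', ((⟪x' - x, y⟫ - ε : ℝ) : EReal) + f x ≤ f x'}

theorem approxSubdiff_zero : approxSubdiff f 0 x = subdiff f x := by
  ext y
  simp only [approxSubdiff, subdiff, sub_zero, mem_ofPred_eq]
  exact ⟨fun h z => by simpa using h (x + z), fun h x' => by simpa using h (x' - x)⟩

theorem mem_approxSubdiff_iff (hf : ClosedConvexFun f) {ε : ℝ} (hx : x ∈ effDom f) :
    y ∈ approxSubdiff f ε x ↔
      ∀ x' ∈ effDom f, ⟪x' - x, y⟫ - ε + toRealFun f x ≤ toRealFun f x' := by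
  refine ⟨fun h x' hx' => ?_, fun h x' => ?_⟩
  · have := h x'
    rwa [← hf.coe_toRealFun hx, ← hf.coe_toRealFun hx', ← EReal.coe_add,
      EReal.coe_le_coe_iff] at this
  · by_cases hx' : x' ∈ effDom f
    · rw [← hf.coe_toRealFun hx, ← hf.coe_toRealFun hx', ← EReal.coe_add, EReal.coe_le_coe_iff]
      exact h x' hx'
    · rw [show f x' = ⊤ by simpa [effDom] using hx']
      exact le_top

theorem mem_subdiff_iff (hf : ClosedConvexFun f) (hx : x ∈ effDom f) :
    y ∈ subdiff f x ↔ ∀ x' ∈ effDom f, ⟪x' - x, y⟫ + toRealFun f x ≤ toRealFun f x' := by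
  simp [← approxSubdiff_zero, mem_approxSubdiff_iff hf hx]

theorem subdiff_eq_biInter (hf : ClosedConvexFun f) (hx : x ∈ effDom f) :
    subdiff f x = ⋂ x' ∈ effDom f, {y | ⟪x' - x, y⟫ ≤ toRealFun f x' - toRealFun f x} := by
  ext y
  simp only [mem_subdiff_iff hf hx, mem_iInter, mem_ofPred_eq, le_sub_iff_add_le]

theorem isClosed_subdiff (hf : ClosedConvexFun f) (hx : x ∈ effDom f) :
    IsClosed (subdiff f x) := by
  rw [subdiff_eq_biInter hf hx]
  exact isClosed_biInter fun x' _ => isClosed_le (by fun_prop) continuous_const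

theorem convex_subdiff (hf : ClosedConvexFun f) (hx : x ∈ effDom f) :
    Convex ℝ (subdiff f x) := by
  rw [subdiff_eq_biInter hf hx]
  exact convex_iInter₂ fun x' _ => convex_halfSpace_le (innerₛₗ ℝ (x' - x)).isLinear _

theorem mem_subdiff_of_tendsto (hf : LowerSemicontinuous f) {ι : Type*} {l : Filter ι}
    [l.NeBot] {xs ys : ι → Euc d} {εs : ι → ℝ} (hmem : ∀ i, ys i ∈ approxSubdiff f (εs i) (xs i))
    (hx : Tendsto xs l (𝓝 x)) (hy : Tendsto ys l (𝓝 y)) (hε : Tendsto εs l (𝓝 0)) :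
    y ∈ subdiff f x := by
  rw [← approxSubdiff_zero]
  intro x'
  let F : Euc d × Euc d × ℝ → EReal := fun p => ((⟪x' - p.1, p.2.1⟫ - p.2.2 : ℝ) : EReal) + f p.1
  have hF : LowerSemicontinuous F := by
    refine LowerSemicontinuous.add'
      (continuous_coe_real_ereal.comp (by fun_prop)).lowerSemicontinuous
      (hf.comp continuous_fst) fun _ => ?_
    exact EReal.continuousAt_add (Or.inl (EReal.coe_ne_top _)) (Or.inl (EReal.coe_ne_bot _))
  have hlim : (x, y, (0 : ℝ)) ∈ F ⁻¹' Iic (f x') :=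
    (hF.isClosed_preimage (f x')).mem_of_tendsto (hx.prodMk_nhds (hy.prodMk_nhds hε))
      (Eventually.of_forall fun i => hmem i x')
  exact hlim

theorem norm_le_of_mem_approxSubdiff (hf : ClosedConvexFun f) {r ε : ℝ} {K : NNReal}
    (hr : 0 < r) (hball : ball x r ⊆ effDom f) (hK : LipschitzOnWith K (toRealFun f) (ball x r))
    (hy : y ∈ approxSubdiff f ε x) : ‖y‖ ≤ K + 2 * ε / r := by
  have hx : x ∈ effDom f := hball (mem_ball_self hr)
  rw [mem_approxSubdiff_iff hf hx] at hy
  have hε : 0 ≤ ε := by simpa using hy x hx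
  rcases eq_or_ne y 0 with rfl | hy0
  · rw [norm_zero]
    positivity
  set z := x + (r / 2 * ‖y‖⁻¹) • y
  have hzx : z - x = (r / 2 * ‖y‖⁻¹) • y := add_sub_cancel_left _ _
  have hnorm : ‖z - x‖ = r / 2 := by
    rw [hzx, norm_smul, Real.norm_of_nonneg (by positivity), mul_assoc,
      inv_mul_cancel₀ (norm_ne_zero_iff.2 hy0), mul_one]
  have hz : z ∈ ball x r := by
    rw [mem_ball_iff_norm, hnorm]
    linarith
  have hinner : ⟪z - x, y⟫ = r / 2 * ‖y‖ := by
    rw [hzx, real_inner_smul_left, real_inner_self_eq_norm_sq]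
    field_simp
  have hlip : toRealFun f z - toRealFun f x ≤ K * (r / 2) := by
    have := hK.dist_le_mul z hz x (mem_ball_self hr)
    rw [Real.dist_eq, dist_eq_norm, hnorm] at this
    exact (le_abs_self _).trans this
  have hsub := hy z (hball hz)
  rw [hinner] at hsub
  have : K + 2 * ε / r - ‖y‖ = 2 / r * (K * (r / 2) + ε - r / 2 * ‖y‖) := by
    field_simp
  nlinarith [div_pos two_pos hr]

theorem mem_subdiff_of_hasGradientAt (hf : ClosedConvexFun f) {G : Euc d}
    (hx : x ∈ interior (effDom f)) (hG : HasGradientAt (toRealFun f) G x) : G ∈ subdiff f x := by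
  rw [mem_subdiff_iff hf (interior_subset hx)]
  intro x' hx'
  let L := AffineMap.lineMap (k := ℝ) x x'
  have hconv : ConvexOn ℝ (L ⁻¹' effDom f) (toRealFun f ∘ L) :=
    hf.convexOn_toRealFun.comp_affineMap L
  have hderiv : HasDerivAt (toRealFun f ∘ L) ⟪G, x' - x⟫ 0 := by
    have hG' := hG.hasFDerivAt
    rw [← AffineMap.lineMap_apply_zero (k := ℝ) x x'] at hG'
    simpa using hG'.comp_hasDerivAt 0 AffineMap.hasDerivAt_lineMap
  have := hconv.le_slope_of_hasDerivAt (x := 0) (y := 1) (by simpa [L] using interior_subset hx)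
    (by simpa [L] using hx') one_pos hderiv
  simp only [slope_def_field, Function.comp_apply, AffineMap.lineMap_apply_one,
    AffineMap.lineMap_apply_zero, sub_zero, div_one, L] at this
  rw [real_inner_comm]
  linarith

theorem eq_of_mem_subdiff_of_hasGradientAt (hf : ClosedConvexFun f) {G : Euc d}
    (hx : x ∈ interior (effDom f)) (hG : HasGradientAt (toRealFun f) G x)
    (hy : y ∈ subdiff f x) : y = G := by
  have hmin : IsLocalMin (fun z => toRealFun f z - ⟪y, z⟫) x := by
    filter_upwards [isOpen_interior.mem_nhds hx] with z hz
    have := (mem_subdiff_iff hf (interior_subset hx)).1 hy z (interior_subset hz)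
    rw [inner_sub_left, real_inner_comm y, real_inner_comm y] at this
    linarith
  have hzero := hmin.hasFDerivAt_eq_zero (hG.hasFDerivAt.sub (innerSL ℝ y).hasFDerivAt)
  have h := congrArg (fun L => L (G - y)) hzero
  exact (sub_eq_zero.1 (by simpa [← inner_sub_left] using h)).symm

theorem exists_mem_domGrad_dist_lt (hf : ClosedConvexFun f) (hx : x ∈ interior (effDom f))
    {r : ℝ} (hr : 0 < r) : ∃ z ∈ domGrad f, dist z x < r := by
  obtain ⟨δ, hδ, K, hball, hK⟩ := hf.exists_ball_lipschitzOnWith hx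
  have hsub : ball x (min δ r) ⊆ ball x δ := ball_subset_ball (min_le_left _ _)
  obtain ⟨z, hzB, hz⟩ := MeasureTheory.Measure.exists_mem_of_measure_ne_zero_of_ae
    (measure_ball_pos MeasureTheory.volume x (lt_min hδ hr)).ne'
    ((hK.mono hsub).ae_differentiableWithinAt measurableSet_ball)
  exact ⟨z, ⟨hball (hsub hzB), hz.differentiableAt (isOpen_ball.mem_nhds hzB)⟩,
    (mem_ball.1 hzB).trans_le (min_le_right _ _)⟩

theorem exists_mem_approxSubdiff_of_restrSup_eq (hf : ClosedConvexFun f) {A : Set (Euc d)}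
    (hx : x ∈ effDom f) (hfA : restrSup f A x = f x) {ε : ℝ} (hε : 0 < ε) :
    ∃ y ∈ A, y ∈ approxSubdiff f ε x := by
  have hlt : ((toRealFun f x - ε : ℝ) : EReal) < restrSup f A x := by
    rw [hfA, ← hf.coe_toRealFun hx, EReal.coe_lt_coe_iff]
    linarith
  simp only [restrSup, lt_iSup_iff] at hlt
  obtain ⟨y, hyA, hy⟩ := hlt
  refine ⟨y, hyA, (mem_approxSubdiff_iff hf hx).2 fun x' hx' => ?_⟩
  have hyoung : ((⟪x', y⟫ - toRealFun f x' : ℝ) : EReal) ≤ fconj f y := by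
    rw [EReal.coe_sub, hf.coe_toRealFun hx']
    exact le_iSup (fun z => ((⟪z, y⟫ : ℝ) : EReal) - f z) x'
  have := hy.trans_le (EReal.sub_le_sub le_rfl hyoung)
  rw [← EReal.coe_sub, EReal.coe_lt_coe_iff] at this
  rw [inner_sub_left]
  linarith

theorem mem_approxSubdiff_of_mem_approxSubdiff (hf : ClosedConvexFun f) {z z' : Euc d}
    {ε ε' : ℝ} (hz : z ∈ effDom f) (hz' : z' ∈ effDom f) (hy : y ∈ approxSubdiff f ε' z')
    (hε : ε' + ⟪z' - z, y⟫ + (toRealFun f z - toRealFun f z') ≤ ε) :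
    y ∈ approxSubdiff f ε z := by
  rw [mem_approxSubdiff_iff hf hz'] at hy
  refine (mem_approxSubdiff_iff hf hz).2 fun x' hx' => ?_
  have hsplit : ⟪x' - z, y⟫ = ⟪x' - z', y⟫ + ⟪z' - z, y⟫ := by
    rw [← inner_add_left, sub_add_sub_cancel]
  linarith [hy x' hx']

theorem inner_le_of_mem_approxSubdiff (hf : ClosedConvexFun f) {v h : Euc d} {t ε : ℝ}
    (ht : 0 < t) (hx : x ∈ effDom f) (hxt : x + t • h ∈ effDom f) (hv : v ∈ subdiff f x)
    (hy : y ∈ approxSubdiff f ε (x + t • h)) : ⟪h, v⟫ ≤ ⟪h, y⟫ + ε / t := by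
  have hv' := (mem_subdiff_iff hf hx).1 hv _ hxt
  have hy' := (mem_approxSubdiff_iff hf hxt).1 hy x hx
  rw [add_sub_cancel_left, real_inner_smul_left] at hv'
  rw [sub_add_cancel_left, inner_neg_left, real_inner_smul_left] at hy'
  have := (le_div_iff₀ ht).2 (by linarith : (⟪h, v⟫ - ⟪h, y⟫) * t ≤ ε)
  linarith

theorem mem_subdiff_and_inner_le_of_tendsto (hf : ClosedConvexFun f) {ι : Type*} {l : Filter ι}
    [l.NeBot] {t : ι → ℝ} {ys : ι → Euc d} {h y₀ : Euc d} (hx : x ∈ effDom f)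
    (ht : ∀ i, 0 < t i) (hxt : ∀ i, x + t i • h ∈ effDom f)
    (hys : ∀ i, ys i ∈ approxSubdiff f (t i ^ 2) (x + t i • h))
    (ht0 : Tendsto t l (𝓝 0)) (hy₀ : Tendsto ys l (𝓝 y₀)) :
    y₀ ∈ subdiff f x ∧ ∀ v ∈ subdiff f x, ⟪h, v⟫ ≤ ⟪h, y₀⟫ := by
  have hxs : Tendsto (fun i => x + t i • h) l (𝓝 x) := by
    simpa using tendsto_const_nhds.add (ht0.smul_const h)
  refine ⟨mem_subdiff_of_tendsto hf.lowerSemicontinuous hys hxs hy₀ (by simpa using ht0.pow 2),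
    fun v hv => ?_⟩
  have hineq : ∀ i, ⟪h, v⟫ ≤ ⟪h, ys i⟫ + t i := fun i => by
    simpa [sq, mul_div_cancel_right₀ _ (ht i).ne'] using
      inner_le_of_mem_approxSubdiff hf (ht i) hx (hxt i) hv (hys i)
  simpa using ge_of_tendsto' ((tendsto_const_nhds.inner hy₀).add ht0) hineq

/-- `P z' y` records where the approximate subgradient `y` comes from (a point of `A`, or the
gradient at a differentiability point `z'`), so that this provenance survives in the limit. -/
theorem exists_tendsto_mem_subdiff_inner_le (hf : ClosedConvexFun f)
    (hx : x ∈ interior (effDom f)) (P : Euc d → Euc d → Prop)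
    (hP : ∀ᶠ z in 𝓝 x, ∀ ε > 0, ∃ z' y, P z' y ∧ dist z' z < ε ∧ y ∈ approxSubdiff f ε z)
    (h : Euc d) :
    ∃ zs ys : ℕ → Euc d, ∃ y₀, (∀ n, P (zs n) (ys n)) ∧ Tendsto zs atTop (𝓝 x) ∧
      Tendsto ys atTop (𝓝 y₀) ∧ y₀ ∈ subdiff f x ∧ ∀ v ∈ subdiff f x, ⟪h, v⟫ ≤ ⟪h, y₀⟫ := by
  obtain ⟨δ, hδ, K, hball, hK⟩ := hf.exists_ball_lipschitzOnWith hx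
  have hline : Tendsto (fun t : ℝ => x + t • h) (𝓝[>] 0) (𝓝 x) :=
    (Continuous.tendsto' (by fun_prop) 0 x (by simp)).mono_left nhdsWithin_le_nhds
  have hpts : ∀ n : ℕ, ∃ t ∈ Ioo (0 : ℝ) (1 / ((n : ℝ) + 1)), x + t • h ∈ ball x (δ / 2) ∧
      ∀ ε > 0, ∃ z' y, P z' y ∧ dist z' (x + t • h) < ε ∧ y ∈ approxSubdiff f ε (x + t • h) :=
    fun n => (Filter.Eventually.and (Ioo_mem_nhdsGT (by positivity))
      (hline.eventually (Filter.Eventually.and (ball_mem_nhds x (half_pos hδ)) hP))).exists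
  choose t ht hxt hPt using hpts
  choose zs ys hzsP hzs hys using fun n => hPt n (t n ^ 2) (pow_pos (ht n).1 2)
  have ht0 : Tendsto t atTop (𝓝 0) := squeeze_zero (fun n => (ht n).1.le) (fun n => (ht n).2.le)
    tendsto_one_div_add_atTop_nhds_zero_nat
  have hbound : ∀ n, ys n ∈ closedBall (0 : Euc d) (K + 4 / δ) := by
    intro n
    have hsub : ball (x + t n • h) (δ / 2) ⊆ ball x δ :=
      ball_subset_ball' (by linarith [mem_ball.1 (hxt n)])
    have hnorm := norm_le_of_mem_approxSubdiff hf (half_pos hδ)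
      (hsub.trans (hball.trans interior_subset)) (hK.mono hsub) (hys n)
    have ht1 : t n ≤ 1 :=
      (ht n).2.le.trans ((Nat.one_div_le_one_div (Nat.zero_le n)).trans (by simp))
    rw [mem_closedBall_zero_iff]
    refine hnorm.trans ?_
    rw [show 2 * t n ^ 2 / (δ / 2) = 4 * t n ^ 2 / δ by ring]
    gcongr
    nlinarith [(ht n).1]
  obtain ⟨y₀, -, φ, hφ, hy₀⟩ := (isCompact_closedBall _ _).tendsto_subseq hbound
  have ht0φ := ht0.comp hφ.tendsto_atTop
  have hzsφ : Tendsto (zs ∘ φ) atTop (𝓝 x) := by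
    refine (hline.comp (tendsto_nhdsWithin_iff.2 ⟨ht0φ, .of_forall fun n => (ht _).1⟩)).congr_dist
      (squeeze_zero (fun _ => dist_nonneg) (fun n => ?_) (by simpa using ht0φ.pow 2))
    rw [dist_comm]
    exact (hzs (φ n)).le
  have hxt' : ∀ n, x + t n • h ∈ effDom f := fun n =>
    interior_subset (hball (ball_subset_ball (half_le_self hδ.le) (hxt n)))
  exact ⟨zs ∘ φ, ys ∘ φ, y₀, fun n => hzsP _, hzsφ, hy₀,
    mem_subdiff_and_inner_le_of_tendsto hf (interior_subset hx) (fun n => (ht (φ n)).1)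
      (fun n => hxt' (φ n)) (fun n => hys (φ n)) ht0φ hy₀⟩

theorem isCompact_subdiff (hf : ClosedConvexFun f) (hx : x ∈ interior (effDom f)) :
    IsCompact (subdiff f x) := by
  obtain ⟨δ, hδ, K, hball, hK⟩ := hf.exists_ball_lipschitzOnWith hx
  refine Metric.isCompact_of_isClosed_isBounded (isClosed_subdiff hf (interior_subset hx))
    ((isBounded_closedBall (x := 0) (r := K)).subset fun y hy => ?_)
  rw [← approxSubdiff_zero] at hy
  simpa using norm_le_of_mem_approxSubdiff hf hδ (hball.trans interior_subset) hK hy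

theorem eventually_exists_gradient_mem_approxSubdiff (hf : ClosedConvexFun f)
    (hx : x ∈ interior (effDom f)) :
    ∀ᶠ z in 𝓝 x, ∀ ε > 0, ∃ z' ∈ domGrad f, dist z' z < ε ∧
      gradient (toRealFun f) z' ∈ approxSubdiff f ε z := by
  obtain ⟨δ, hδ, K, hball, hK⟩ := hf.exists_ball_lipschitzOnWith hx
  filter_upwards [ball_mem_nhds x (half_pos hδ)] with z hz ε hε
  have hzx := mem_ball.1 hz
  have hr : 0 < min (δ / 2 - dist z x) (ε / (2 * K + 1)) := lt_min (by linarith) (by positivity)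
  obtain ⟨z', hz'D, hz'z⟩ :=
    exists_mem_domGrad_dist_lt hf (hball (ball_subset_ball (half_le_self hδ.le) hz)) hr
  have hz'x : dist z' x < δ / 2 := by
    linarith [dist_triangle z' z x, hz'z.trans_le (min_le_left _ _)]
  have hsub : ball z' (δ / 2) ⊆ ball x δ := ball_subset_ball' (by linarith)
  have hG := mem_subdiff_of_hasGradientAt hf hz'D.1 hz'D.2.hasGradientAt
  rw [← approxSubdiff_zero] at hG
  have hGnorm : ‖gradient (toRealFun f) z'‖ ≤ K := by
    simpa using norm_le_of_mem_approxSubdiff hf (half_pos hδ)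
      (hsub.trans (hball.trans interior_subset)) (hK.mono hsub) hG
  have hdist : dist z' z * (2 * K + 1) < ε :=
    (lt_div_iff₀ (by positivity)).1 (hz'z.trans_le (min_le_right _ _))
  have hz'δ : z' ∈ ball x δ := ball_subset_ball (half_le_self hδ.le) hz'x
  have hzδ : z ∈ ball x δ := ball_subset_ball (half_le_self hδ.le) hz
  -- `‖∇f(z')‖ ≤ K` and the `K`-Lipschitz bound make `∇f(z')` a `2K‖z' - z‖`-subgradient at `z`.
  refine ⟨z', hz'D, by nlinarith [dist_nonneg (x := z') (y := z)],
    mem_approxSubdiff_of_mem_approxSubdiff hf (hball.trans interior_subset hzδ)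
      (hball.trans interior_subset hz'δ) hG ?_⟩
  have hinner := real_inner_le_norm (z' - z) (gradient (toRealFun f) z')
  rw [← dist_eq_norm] at hinner
  have hlip := (le_abs_self _).trans (hK.dist_le_mul z hzδ z' hz'δ)
  rw [dist_comm z z'] at hlip
  nlinarith [mul_le_mul_of_nonneg_left hGnorm (dist_nonneg (x := z') (y := z))]

def reachableGrad (f : Euc d → EReal) (x : Euc d) : Set (Euc d) :=
  {v | ∃ xs : ℕ → Euc d, (∀ n, xs n ∈ domGrad f) ∧ Tendsto xs atTop (𝓝 x) ∧
    Tendsto (fun n => gradient (toRealFun f) (xs n)) atTop (𝓝 v)}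

theorem clarke_eq_closure_convexHull_reachableGrad :
    clarke f x = closure (convexHull ℝ (reachableGrad f x)) := rfl

theorem reachableGrad_subset_subdiff (hf : ClosedConvexFun f) :
    reachableGrad f x ⊆ subdiff f x := by
  rintro v ⟨xs, hxs, hlim, hv⟩
  refine mem_subdiff_of_tendsto hf.lowerSemicontinuous (εs := 0) (fun n => ?_) hlim hv
    tendsto_const_nhds
  rw [Pi.zero_apply, approxSubdiff_zero]
  exact mem_subdiff_of_hasGradientAt hf (hxs n).1 (hxs n).2.hasGradientAt

theorem clarke_subset_subdiff (hf : ClosedConvexFun f) (hx : x ∈ effDom f) :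
    clarke f x ⊆ subdiff f x := by
  rw [clarke_eq_closure_convexHull_reachableGrad]
  exact closure_minimal (convexHull_min (reachableGrad_subset_subdiff hf) (convex_subdiff hf hx))
    (isClosed_subdiff hf hx)

theorem subdiff_subset_clarke (hf : ClosedConvexFun f) (hx : x ∈ interior (effDom f)) :
    subdiff f x ⊆ clarke f x := by
  rw [clarke_eq_closure_convexHull_reachableGrad]
  intro v hv
  refine mem_of_forall_exists_inner_le isClosed_closure (convex_convexHull ℝ _).closure fun h => ?_
  obtain ⟨zs, ys, y₀, hP, hzs, hys, -, hle⟩ := exists_tendsto_mem_subdiff_inner_le hf hx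
    (fun z y => z ∈ domGrad f ∧ y = gradient (toRealFun f) z)
    ((eventually_exists_gradient_mem_approxSubdiff hf hx).mono fun z hz ε hε =>
      let ⟨z', hz'D, hdist, hgrad⟩ := hz ε hε
      ⟨z', _, ⟨hz'D, rfl⟩, hdist, hgrad⟩) h
  have hys' : ys = fun n => gradient (toRealFun f) (zs n) := funext fun n => (hP n).2
  exact ⟨y₀, subset_closure (subset_convexHull ℝ _ ⟨zs, fun n => (hP n).1, hzs, hys' ▸ hys⟩),
    hle v hv⟩

variable {A : Set (Euc d)}

theorem subdiff_eq_convexHull_inter (hf : ClosedConvexFun f) (hA : IsClosed A)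
    (hfA : ∀ x ∈ closure (interior (effDom f)), restrSup f A x = f x)
    (hx : x ∈ interior (effDom f)) : subdiff f x = convexHull ℝ (subdiff f x ∩ A) := by
  refine Subset.antisymm (fun v hv => ?_)
    (convexHull_min inter_subset_left (convex_subdiff hf (interior_subset hx)))
  refine mem_of_forall_exists_inner_le
    ((isCompact_subdiff hf hx).inter_right hA).convexHull_of_finiteDimensional.isClosed
    (convex_convexHull ℝ _) fun h => ?_
  have hnear : ∀ᶠ z in 𝓝 x, ∀ ε > 0, ∃ z' y, y ∈ A ∧ dist z' z < ε ∧ y ∈ approxSubdiff f ε z := by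
    filter_upwards [isOpen_interior.mem_nhds hx] with z hz ε hε
    obtain ⟨y, hyA, hy⟩ :=
      exists_mem_approxSubdiff_of_restrSup_eq hf (interior_subset hz) (hfA z (subset_closure hz)) hε
    exact ⟨z, y, hyA, by simpa using hε, hy⟩
  obtain ⟨-, ys, y₀, hyA, -, hys, hy₀, hle⟩ :=
    exists_tendsto_mem_subdiff_inner_le hf hx (fun _ y => y ∈ A) hnear h
  exact ⟨y₀, subset_convexHull ℝ _ ⟨hy₀, hA.mem_of_tendsto hys (Eventually.of_forall hyA)⟩,
    hle v hv⟩

theorem gradient_mem_of_mem_domGrad (hf : ClosedConvexFun f) (hA : IsClosed A)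
    (hfA : ∀ x ∈ closure (interior (effDom f)), restrSup f A x = f x) (hx : x ∈ domGrad f) :
    gradient (toRealFun f) x ∈ A := by
  have hG := mem_subdiff_of_hasGradientAt hf hx.1 hx.2.hasGradientAt
  obtain ⟨y, hy, hyA⟩ : (subdiff f x ∩ A).Nonempty := by
    rw [← convexHull_nonempty_iff (𝕜 := ℝ), ← subdiff_eq_convexHull_inter hf hA hfA hx.1]
    exact ⟨_, hG⟩
  rwa [← eq_of_mem_subdiff_of_hasGradientAt hf hx.1 hx.2.hasGradientAt hy]

theorem reachableGrad_subset (hf : ClosedConvexFun f) (hA : IsClosed A)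
    (hfA : ∀ x ∈ closure (interior (effDom f)), restrSup f A x = f x) :
    reachableGrad f x ⊆ A := by
  rintro v ⟨xs, hxs, -, hv⟩
  exact hA.mem_of_tendsto hv
    (Eventually.of_forall fun n => gradient_mem_of_mem_domGrad hf hA hfA (hxs n))

end ConvexAnalysis

theorem stmt8_general {d : ℕ} (f : Euc d → EReal) (hf : ClosedConvexFun f)
    (A : Set (Euc d)) (hA : IsClosed A)
    (hfA : ∀ x ∈ closure (interior (effDom f)), restrSup f A x = f x) :
    (∀ x ∈ interior (effDom f), clarke f x = subdiff f x ∧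
      subdiff f x = convexHull ℝ (subdiff f x ∩ A)) ∧
    (∀ x : Euc d, (clarke f x).Nonempty →
      clarke f x ⊆ closure (convexHull ℝ (subdiff f x ∩ A))) := by
  refine ⟨fun x hx => ⟨?_, subdiff_eq_convexHull_inter hf hA hfA hx⟩, fun x _ => ?_⟩
  · exact (clarke_subset_subdiff hf (interior_subset hx)).antisymm (subdiff_subset_clarke hf hx)
  · rw [clarke_eq_closure_convexHull_reachableGrad]
    exact closure_mono (convexHull_mono
      (subset_inter (reachableGrad_subset_subdiff hf) (reachableGrad_subset hf hA hfA)))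

/-- Lemma 5 of the paper, second part. -/
theorem stmt8 {d : ℕ} (f : Euc d → EReal) (hf : ClosedConvexFun f)
    (hD : (interior (effDom f)).Nonempty)
    (A : Set (Euc d)) (hA : IsClosed A)
    (hfA : ∀ x ∈ closure (interior (effDom f)), restrSup f A x = f x) :
    (∀ x ∈ interior (effDom f), clarke f x = subdiff f x ∧
      subdiff f x = convexHull ℝ (subdiff f x ∩ A)) ∧
    (∀ x : Euc d, (clarke f x).Nonempty →
      clarke f x ⊆ closure (convexHull ℝ (subdiff f x ∩ A))) :=
  stmt8_general f hf A hA hfA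
end
end
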